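/- arXiv:2405.16514 — 8 statements merged into one kernel-verified Lean document; each statement's English description precedes it below -/
import Mathlib

section
/- Let 0 → M′ →f→ M →g→ M″ → 0 be a short exact sequence of S-modules such that M″ is annihilated by ω. Then the push-out of this sequence along the multiplication map ω : M′ → M′ is a split short exact sequence; equivalently, there exists an S-linear map φ : M → M′ such that φ ∘ f = ω·id_{M′}. (Lemma 2.8 of the paper.) -/
/-- Lemma 2.8.
Let `0 → M' →f→ M →g→ M'' → 0` be a short exact sequence of `S`-modules over a
commutative noetherian local ring `(S, 𝔫)` with `ω ∈ 𝔫` a non-zerodivisor, and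
suppose `M''` is annihilated by `ω`.  Then the push-out of the sequence along
multiplication by `ω` on `M'` splits; equivalently, there is an `S`-linear map
`φ : M → M'` with `φ ∘ f = ω · id_{M'}`. -/
theorem stmt_0
    {S : Type*} [CommRing S] [IsNoetherianRing S] [IsLocalRing S]
    (ω : S) (hω_mem : ω ∈ IsLocalRing.maximalIdeal S) (hω : ω ∈ nonZeroDivisors S)
    {M' M M'' : Type*}
    [AddCommGroup M'] [Module S M'] [Module.Finite S M']
    [AddCommGroup M] [Module S M] [Module.Finite S M]
    [AddCommGroup M''] [Module S M''] [Module.Finite S M'']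
    (f : M' →ₗ[S] M) (g : M →ₗ[S] M'')
    (hf : Function.Injective f) (hg : Function.Surjective g)
    (hexact : LinearMap.range f = LinearMap.ker g)
    (hann : ∀ x : M'', ω • x = 0) :
    ∃ φ : M →ₗ[S] M', φ.comp f = ω • (LinearMap.id : M' →ₗ[S] M') := by
  have hmem : ∀ m : M, ω • m ∈ LinearMap.range f := by
    intro m
    rw [hexact, LinearMap.mem_ker, map_smul, hann]
  let e := LinearEquiv.ofInjective f hf
  let ψ : M →ₗ[S] LinearMap.range f :=
    LinearMap.codRestrict _ (ω • LinearMap.id) hmem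
  refine ⟨e.symm.toLinearMap.comp ψ, ?_⟩
  ext x
  apply hf
  simp only [LinearMap.comp_apply, LinearMap.smul_apply, LinearMap.id_apply]
  have h1 : ψ (f x) = e (ω • x) := by
    apply Subtype.ext
    simp [ψ, e, LinearEquiv.ofInjective_apply, map_smul]
  rw [h1]
  simp
end

section
/- Let g : G → P be an injective S-linear map whose cokernel is annihilated by ω (i.e., ω • p ∈ range g for every p ∈ P). Then there exists a unique S-linear map g_Σ : P → G such that g ∘ g_Σ = ω·id_P; moreover this g_Σ also satisfies g_Σ ∘ g = ω·id_G, and the cokernel of g_Σ is annihilated by ω (i.e., ω • x ∈ range g_Σ for every x ∈ G). (Lemma 2.10 of the paper.) -/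
namespace LinearMap

variable {R M N : Type*} [CommSemiring R] [AddCommMonoid M] [Module R M]
  [AddCommMonoid N] [Module R N]

theorem comp_eq_smul_id_of_injective_of_comp_eq_smul_id {g : M →ₗ[R] N} (hg : Function.Injective g)
    {f : N →ₗ[R] M} {r : R} (hgf : g ∘ₗ f = r • id) : f ∘ₗ g = r • id := by
  ext x
  apply hg
  simpa using congr($hgf (g x))

theorem smul_mem_range_of_comp_eq_smul_id {g : M →ₗ[R] N} {f : N →ₗ[R] M} {r : R}
    (hfg : f ∘ₗ g = r • id) (x : M) : r • x ∈ range f :=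
  ⟨g x, by simpa using congr($hfg x)⟩

end LinearMap

theorem stmt_1_general
    {S : Type*} [CommRing S] (ω : S) {G P : Type*}
    [AddCommGroup G] [Module S G] [AddCommGroup P] [Module S P]
    (g : G →ₗ[S] P) (hg : Function.Injective g)
    (hcoker : ∀ p : P, ω • p ∈ LinearMap.range g) :
    (∃! gSig : P →ₗ[S] G, g.comp gSig = ω • (LinearMap.id : P →ₗ[S] P)) ∧
    (∀ gSig : P →ₗ[S] G, g.comp gSig = ω • (LinearMap.id : P →ₗ[S] P) →
      gSig.comp g = ω • (LinearMap.id : G →ₗ[S] G) ∧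
      ∀ x : G, ω • x ∈ LinearMap.range gSig) := by
  have hωg : ∀ p, (ω • LinearMap.id : P →ₗ[S] P) p ∈ LinearMap.range g := by simpa using hcoker
  have hgF := LinearMap.codRestrictOfInjective_comp _ g hg hωg
  refine ⟨⟨_, hgF, fun f hf ↦ (LinearMap.cancel_left hg).mp (hf.trans hgF.symm)⟩, ?_⟩
  intro gSig hgSig
  have hgSig_g := LinearMap.comp_eq_smul_id_of_injective_of_comp_eq_smul_id hg hgSig
  exact ⟨hgSig_g, LinearMap.smul_mem_range_of_comp_eq_smul_id hgSig_g⟩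

/-- Lemma 2.10.
Let `g : G → P` be an injective `S`-linear map whose cokernel is annihilated by
`ω` (i.e. `ω • p ∈ range g` for every `p`).  Then there is a unique `S`-linear
map `g_Σ : P → G` with `g ∘ g_Σ = ω · id_P`; moreover this `g_Σ` satisfies
`g_Σ ∘ g = ω · id_G` and its cokernel is annihilated by `ω`. -/
theorem stmt_1
    {S : Type*} [CommRing S] [IsNoetherianRing S] [IsLocalRing S]
    (ω : S) (hω_mem : ω ∈ IsLocalRing.maximalIdeal S) (hω : ω ∈ nonZeroDivisors S)
    {G P : Type*}
    [AddCommGroup G] [Module S G] [Module.Finite S G]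
    [AddCommGroup P] [Module S P] [Module.Finite S P]
    (g : G →ₗ[S] P) (hg : Function.Injective g)
    (hcoker : ∀ p : P, ω • p ∈ LinearMap.range g) :
    (∃! gSig : P →ₗ[S] G, g.comp gSig = ω • (LinearMap.id : P →ₗ[S] P)) ∧
    (∀ gSig : P →ₗ[S] G, g.comp gSig = ω • (LinearMap.id : P →ₗ[S] P) →
      gSig.comp g = ω • (LinearMap.id : G →ₗ[S] G) ∧
      ∀ x : G, ω • x ∈ LinearMap.range gSig) :=
  stmt_1_general ω g hg hcoker
end

section
/- Let g : G → P, g′ : G′ → P′ and g″ : G″ → P″ be injective S-linear maps whose cokernels are annihilated by ω, and let (φ₁, φ₀) and (θ₁, θ₀) be morphisms of arrows (i.e., φ₁ : G → G′, φ₀ : P → P′ with g′ ∘ φ₁ = φ₀ ∘ g, and θ₁ : G′ → G″, θ₀ : P′ → P″ with g″ ∘ θ₁ = θ₀ ∘ g′) such that φ₁, φ₀, θ₁, θ₀ are all injective and the induced maps on cokernels coker φ₁ → coker φ₀ and coker θ₁ → coker θ₀ are injective. Then the induced map z : coker(θ₁ ∘ φ₁) → coker(θ₀ ∘ φ₀)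 is injective and its cokernel is annihilated by ω. (Module-level content of Lemma 2.3 of the paper.) -/
/-- module-level content of Lemma 2.3.
Let `g, g', g''` be injective maps with cokernels annihilated by `ω`, and let
`(φ₁, φ₀) : g → g'` and `(θ₁, θ₀) : g' → g''` be morphisms of arrows that are
componentwise injective and whose induced maps on cokernels
`coker φ₁ → coker φ₀` and `coker θ₁ → coker θ₀` are injective.  Then the map
`z : coker (θ₁ ∘ φ₁) → coker (θ₀ ∘ φ₀)` induced by `g''` is injective and its
cokernel is annihilated by `ω`.  (The hypotheses `hleφ`, `hleθ`, `hle` merely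
record the compatibilities needed to form the induced maps on cokernels; they
are consequences of the commutativity assumptions.) -/
theorem stmt_4
    {S : Type*} [CommRing S] [IsNoetherianRing S] [IsLocalRing S]
    (ω : S) (hω_mem : ω ∈ IsLocalRing.maximalIdeal S) (hω : ω ∈ nonZeroDivisors S)
    {G P G' P' G'' P'' : Type*}
    [AddCommGroup G] [Module S G] [Module.Finite S G]
    [AddCommGroup P] [Module S P] [Module.Finite S P]
    [AddCommGroup G'] [Module S G'] [Module.Finite S G']
    [AddCommGroup P'] [Module S P'] [Module.Finite S P']
    [AddCommGroup G''] [Module S G''] [Module.Finite S G'']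
    [AddCommGroup P''] [Module S P''] [Module.Finite S P'']
    (g : G →ₗ[S] P) (g' : G' →ₗ[S] P') (g'' : G'' →ₗ[S] P'')
    (hg : Function.Injective g) (hg' : Function.Injective g')
    (hg'' : Function.Injective g'')
    (hcok_g : ∀ p : P, ω • p ∈ LinearMap.range g)
    (hcok_g' : ∀ p : P', ω • p ∈ LinearMap.range g')
    (hcok_g'' : ∀ p : P'', ω • p ∈ LinearMap.range g'')
    (φ₁ : G →ₗ[S] G') (φ₀ : P →ₗ[S] P')
    (θ₁ : G' →ₗ[S] G'') (θ₀ : P' →ₗ[S] P'')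
    (hcommφ : g'.comp φ₁ = φ₀.comp g) (hcommθ : g''.comp θ₁ = θ₀.comp g')
    (hφ₁ : Function.Injective φ₁) (hφ₀ : Function.Injective φ₀)
    (hθ₁ : Function.Injective θ₁) (hθ₀ : Function.Injective θ₀)
    (hleφ : LinearMap.range φ₁ ≤ (LinearMap.range φ₀).comap g')
    (hleθ : LinearMap.range θ₁ ≤ (LinearMap.range θ₀).comap g'')
    (hcokerφ : Function.Injective
        (Submodule.mapQ (LinearMap.range φ₁) (LinearMap.range φ₀) g' hleφ))
    (hcokerθ : Function.Injective
        (Submodule.mapQ (LinearMap.range θ₁) (LinearMap.range θ₀) g'' hleθ))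
    (hle : LinearMap.range (θ₁.comp φ₁) ≤ (LinearMap.range (θ₀.comp φ₀)).comap g'') :
    Function.Injective
      (Submodule.mapQ (LinearMap.range (θ₁.comp φ₁)) (LinearMap.range (θ₀.comp φ₀)) g'' hle) ∧
    ∀ x : P'' ⧸ LinearMap.range (θ₀.comp φ₀),
      ω • x ∈ LinearMap.range
        (Submodule.mapQ (LinearMap.range (θ₁.comp φ₁)) (LinearMap.range (θ₀.comp φ₀)) g'' hle) := by
  constructor
  · intro a b hab
    obtain ⟨x, rfl⟩ := Submodule.Quotient.mk_surjective _ a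
    obtain ⟨y, rfl⟩ := Submodule.Quotient.mk_surjective _ b
    rw [Submodule.mapQ_apply, Submodule.mapQ_apply, Submodule.Quotient.eq] at hab
    rw [Submodule.Quotient.eq]
    obtain ⟨p, hp⟩ := hab
    -- hp : (θ₀.comp φ₀) p = g'' x - g'' y
    have h1 : Submodule.mapQ (LinearMap.range θ₁) (LinearMap.range θ₀) g'' hleθ
        (Submodule.Quotient.mk (x - y)) = 0 := by
      rw [Submodule.mapQ_apply, Submodule.Quotient.mk_eq_zero, map_sub, ← hp]
      exact ⟨φ₀ p, rfl⟩
    have h2 : (Submodule.Quotient.mk (x - y) :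
        G'' ⧸ LinearMap.range θ₁) = 0 := hcokerθ (by simpa using h1)
    rw [Submodule.Quotient.mk_eq_zero] at h2
    obtain ⟨x', hx'⟩ := h2
    have h3 : g' x' = φ₀ p := by
      apply hθ₀
      have : g'' (θ₁ x') = θ₀ (g' x') := LinearMap.congr_fun hcommθ x'
      rw [← this, hx', map_sub, ← hp]; rfl
    have h4 : Submodule.mapQ (LinearMap.range φ₁) (LinearMap.range φ₀) g' hleφ
        (Submodule.Quotient.mk x') = 0 := by
      rw [Submodule.mapQ_apply, Submodule.Quotient.mk_eq_zero, h3]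
      exact ⟨p, rfl⟩
    have h5 : (Submodule.Quotient.mk x' : G' ⧸ LinearMap.range φ₁) = 0 :=
      hcokerφ (by simpa using h4)
    rw [Submodule.Quotient.mk_eq_zero] at h5
    obtain ⟨x₀, hx₀⟩ := h5
    exact ⟨x₀, by simp [LinearMap.comp_apply, hx₀, hx']⟩
  · intro x
    obtain ⟨p, rfl⟩ := Submodule.Quotient.mk_surjective _ x
    obtain ⟨x'', hx''⟩ := hcok_g'' p
    exact ⟨Submodule.Quotient.mk x'', by
      rw [Submodule.mapQ_apply, hx'', ← Submodule.Quotient.mk_smul]⟩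
end

section
/- Let f : G → P, g : G′ → P′ and h : G″ → P″ be S-linear maps with g and h injective and with the cokernels of g and h annihilated by ω. Let (φ₁, φ₀) : (G →f→ P) → (G′ →g→ P′) and (θ₁, θ₀) : (G →f→ P) → (G″ →h→ P″) be morphisms of arrows with φ₁ and φ₀ injective and such that the induced map on cokernels coker φ₁ → coker φ₀ is injective. Let E₁ be the push-out of φ₁ along θ₁, let E₀ be the push-out of φ₀ along θ₀, and let e : E₁ → E₀ be the S-linear map induced by g and h via the universal property of the push-out. Then e is injective and its cokernel is annihilated by ω (i.e., ω • x ∈ range e for every x ∈ E₀). (Module-level content of Proposition 2.5 of the paper: push-outs of admissible monics exist in Mon(ω, 𝒢).) -/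
/-- module-level content of Proposition 2.5: push-outs of
admissible monics exist in `Mon(ω, 𝒢)`.
Let `f : G → P`, `g : G' → P'`, `h : G'' → P''` with `g, h` injective and
their cokernels annihilated by `ω`.  Let `(φ₁, φ₀) : f → g` and
`(θ₁, θ₀) : f → h` be morphisms of arrows with `φ₁, φ₀` injective and with
injective induced map on cokernels `coker φ₁ → coker φ₀`.  Realizing the
push-out of `φ₁` along `θ₁` as `E₁ = (G' × G'') ⧸ range (φ₁, -θ₁)` and that
of `φ₀` along `θ₀` as `E₀ = (P' × P'') ⧸ range (φ₀, -θ₀)`, the map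
`e : E₁ → E₀` induced by `g × h` is injective and its cokernel is annihilated
by `ω`. -/
theorem stmt_5
    {S : Type*} [CommRing S] [IsNoetherianRing S] [IsLocalRing S]
    (ω : S) (hω_mem : ω ∈ IsLocalRing.maximalIdeal S) (hω : ω ∈ nonZeroDivisors S)
    {G P G' P' G'' P'' : Type*}
    [AddCommGroup G] [Module S G] [Module.Finite S G]
    [AddCommGroup P] [Module S P] [Module.Finite S P]
    [AddCommGroup G'] [Module S G'] [Module.Finite S G']
    [AddCommGroup P'] [Module S P'] [Module.Finite S P']
    [AddCommGroup G''] [Module S G''] [Module.Finite S G'']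
    [AddCommGroup P''] [Module S P''] [Module.Finite S P'']
    (f : G →ₗ[S] P) (g : G' →ₗ[S] P') (h : G'' →ₗ[S] P'')
    (hg : Function.Injective g) (hh : Function.Injective h)
    (hcok_g : ∀ p : P', ω • p ∈ LinearMap.range g)
    (hcok_h : ∀ p : P'', ω • p ∈ LinearMap.range h)
    (φ₁ : G →ₗ[S] G') (φ₀ : P →ₗ[S] P')
    (θ₁ : G →ₗ[S] G'') (θ₀ : P →ₗ[S] P'')
    (hcommφ : g.comp φ₁ = φ₀.comp f) (hcommθ : h.comp θ₁ = θ₀.comp f)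
    (hφ₁ : Function.Injective φ₁) (hφ₀ : Function.Injective φ₀)
    (hleφ : LinearMap.range φ₁ ≤ (LinearMap.range φ₀).comap g)
    (hcokerφ : Function.Injective
        (Submodule.mapQ (LinearMap.range φ₁) (LinearMap.range φ₀) g hleφ))
    (hle : LinearMap.range (φ₁.prod (-θ₁)) ≤
        (LinearMap.range (φ₀.prod (-θ₀))).comap (g.prodMap h)) :
    Function.Injective
      (Submodule.mapQ (LinearMap.range (φ₁.prod (-θ₁)))
        (LinearMap.range (φ₀.prod (-θ₀))) (g.prodMap h) hle) ∧
    ∀ x : (P' × P'') ⧸ LinearMap.range (φ₀.prod (-θ₀)),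
      ω • x ∈ LinearMap.range
        (Submodule.mapQ (LinearMap.range (φ₁.prod (-θ₁)))
          (LinearMap.range (φ₀.prod (-θ₀))) (g.prodMap h) hle) := by
  constructor
  · rw [← LinearMap.ker_eq_bot, Submodule.eq_bot_iff]
    intro x hx
    obtain ⟨⟨a, b⟩, rfl⟩ := Submodule.Quotient.mk_surjective _ x
    rw [LinearMap.mem_ker, Submodule.mapQ_apply, Submodule.Quotient.mk_eq_zero] at hx
    obtain ⟨p, hp⟩ := hx
    have hp1 : φ₀ p = g a := congrArg Prod.fst hp
    have hp2 : -θ₀ p = h b := congrArg Prod.snd hp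
    have ha : a ∈ LinearMap.range φ₁ := by
      have h0 : Submodule.mapQ (LinearMap.range φ₁) (LinearMap.range φ₀) g hleφ
          (Submodule.Quotient.mk a) = 0 := by
        rw [Submodule.mapQ_apply, Submodule.Quotient.mk_eq_zero]
        exact ⟨p, hp1⟩
      have := hcokerφ (a₁ := Submodule.Quotient.mk a) (a₂ := 0) (by simpa using h0)
      rwa [Submodule.Quotient.mk_eq_zero] at this
    obtain ⟨x, rfl⟩ := ha
    have hpf : p = f x := by
      apply hφ₀
      have hc := congrFun (congrArg DFunLike.coe hcommφ) x
      simp only [LinearMap.comp_apply] at hc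
      rw [hp1, hc]
    have hb : b = -θ₁ x := by
      apply hh
      rw [← hp2, hpf]
      have := congrFun (congrArg DFunLike.coe hcommθ) x
      simp only [LinearMap.comp_apply] at this
      simp [this]
    rw [Submodule.Quotient.mk_eq_zero]
    exact ⟨x, by simp [hb]⟩
  · intro x
    obtain ⟨⟨p', p''⟩, rfl⟩ := Submodule.Quotient.mk_surjective _ x
    obtain ⟨a, ha⟩ := hcok_g p'
    obtain ⟨b, hb⟩ := hcok_h p''
    refine ⟨Submodule.Quotient.mk (a, b), ?_⟩
    rw [Submodule.mapQ_apply, ← Submodule.Quotient.mk_smul]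
    congr 1
    simp [Prod.ext_iff, ha, hb, Prod.smul_def]
end

section
/- Let f : G → P, h : G″ → P″ and g : G′ → P′ be S-linear maps with f, h, g injective and with the cokernels of f and h annihilated by ω. Let (φ₁, φ₀) : (G →f→ P) → (G′ →g→ P′) and (θ₁, θ₀) : (G″ →h→ P″) → (G′ →g→ P′) be morphisms of arrows. Let Y₁ = {(a, b) ∈ G × G″ : φ₁(a) = θ₁(b)} and Y₀ = {(p, q) ∈ P × P″ : φ₀(p) = θ₀(q)} be the pull-backs, and let y : Y₁ → Y₀ be the map induced by f and h, i.e., y(a, b) = (f(a), h(b)). Then y is injective and its cokernel is annihilated by ω: for every (p, q) ∈ Y₀ there exists (a, b) ∈ Y₁ with f(a) = ω • p and h(b) = ω • q. (Module-level content of Proposition 2.6 of the paper: pull-backs of admissible epics exist in Mon(ω, 𝒢).) -/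
/-- module-level content of Proposition 2.6: pull-backs of
admissible epics exist in `Mon(ω, 𝒢)`.
Let `f : G → P`, `h : G'' → P''`, `g : G' → P'` be injective maps, the
cokernels of `f` and `h` being annihilated by `ω`, and let
`(φ₁, φ₀) : f → g` and `(θ₁, θ₀) : h → g` be morphisms of arrows.  Realizing
the pull-backs as `Y₁ = ker (φ₁ ∘ fst - θ₁ ∘ snd) ⊆ G × G''` and
`Y₀ = ker (φ₀ ∘ fst - θ₀ ∘ snd) ⊆ P × P''`, the map `y : Y₁ → Y₀` induced by
`f × h` (i.e. `y (a, b) = (f a, h b)`) is injective and its cokernel is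
annihilated by `ω`: for every `(p, q) ∈ Y₀` there exists `(a, b) ∈ Y₁` with
`f a = ω • p` and `h b = ω • q`. -/
theorem stmt_6
    {S : Type*} [CommRing S] [IsNoetherianRing S] [IsLocalRing S]
    (ω : S) (hω_mem : ω ∈ IsLocalRing.maximalIdeal S) (hω : ω ∈ nonZeroDivisors S)
    {G P G' P' G'' P'' : Type*}
    [AddCommGroup G] [Module S G] [Module.Finite S G]
    [AddCommGroup P] [Module S P] [Module.Finite S P]
    [AddCommGroup G'] [Module S G'] [Module.Finite S G']
    [AddCommGroup P'] [Module S P'] [Module.Finite S P']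
    [AddCommGroup G''] [Module S G''] [Module.Finite S G'']
    [AddCommGroup P''] [Module S P''] [Module.Finite S P'']
    (f : G →ₗ[S] P) (g : G' →ₗ[S] P') (h : G'' →ₗ[S] P'')
    (hf : Function.Injective f) (hg : Function.Injective g)
    (hh : Function.Injective h)
    (hcok_f : ∀ p : P, ω • p ∈ LinearMap.range f)
    (hcok_h : ∀ p : P'', ω • p ∈ LinearMap.range h)
    (φ₁ : G →ₗ[S] G') (φ₀ : P →ₗ[S] P')
    (θ₁ : G'' →ₗ[S] G') (θ₀ : P'' →ₗ[S] P')
    (hcommφ : g.comp φ₁ = φ₀.comp f) (hcommθ : g.comp θ₁ = θ₀.comp h)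
    (hmaps : ∀ x ∈ LinearMap.ker
        (φ₁.comp (LinearMap.fst S G G'') - θ₁.comp (LinearMap.snd S G G'')),
      (f.prodMap h) x ∈ LinearMap.ker
        (φ₀.comp (LinearMap.fst S P P'') - θ₀.comp (LinearMap.snd S P P''))) :
    Function.Injective ((f.prodMap h).restrict hmaps) ∧
    ∀ (p : P) (q : P''), φ₀ p = θ₀ q →
      ∃ (a : G) (b : G''), φ₁ a = θ₁ b ∧ f a = ω • p ∧ h b = ω • q := by
  constructor
  · intro x y hxy
    have := congrArg Subtype.val hxy
    simp only [LinearMap.restrict_apply] at this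
    exact Subtype.ext ((Prod.ext_iff.mpr ⟨hf (congrArg Prod.fst this), hh (congrArg Prod.snd this)⟩))
  · intro p q hpq
    obtain ⟨a, ha⟩ := hcok_f p
    obtain ⟨b, hb⟩ := hcok_h q
    refine ⟨a, b, ?_, ha, hb⟩
    apply hg
    have h1 : g (φ₁ a) = φ₀ (f a) := LinearMap.congr_fun hcommφ a
    have h2 : g (θ₁ b) = θ₀ (h b) := LinearMap.congr_fun hcommθ b
    rw [h1, h2, ha, hb, map_smul, map_smul, hpq]
end

section
/- Let Q be a finitely generated projective S-module (so ω is a non-zerodivisor on Q), let g : G → P be an injective S-linear map whose cokernel is annihilated by ω, and let φ₁ : G → Q and φ₀ : P → Q be S-linear maps such that φ₀ ∘ g = ω • φ₁ and φ₀ is surjective. Then there exist S-linear maps ψ₁ : Q → G and ψ₀ : Q → P such that g ∘ ψ₁ = ω • ψ₀, φ₁ ∘ ψ₁ = id_Q and φ₀ ∘ ψ₀ = id_Q. (This is the statement that (Q →ω→ Q) is a projective object of Mon(ω, 𝒢): every admissible epimorphism onto it splits; part of Lemma 2.9 of the paper.) -/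
/-!
Choose a section `ψ₀` of `φ₀`. Since `ω` kills the cokernel of `g`, the map `ω • ψ₀` lands in
the range of `g`, so by projectivity of `Q` it factors as `g ∘ ψ₁`. Then
`ω • (φ₁ ∘ ψ₁) = φ₀ ∘ g ∘ ψ₁ = ω • (φ₀ ∘ ψ₀) = ω • id`, and `ω` can be cancelled because a
projective module is flat, so a non-zerodivisor of `S` acts injectively on it.
-/

open LinearMap

theorem Module.Projective.exists_comp_eq_of_range_le {R Q M N : Type*} [CommRing R]
    [AddCommGroup Q] [Module R Q] [Module.Projective R Q]
    [AddCommGroup M] [Module R M] [AddCommGroup N] [Module R N]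
    (g : M →ₗ[R] N) (f : Q →ₗ[R] N) (hfg : range f ≤ range g) :
    ∃ k : Q →ₗ[R] M, g ∘ₗ k = f := by
  obtain ⟨k, hk⟩ := Module.projective_lifting_property g.rangeRestrict
    (f.codRestrict (range g) fun q ↦ hfg ⟨q, rfl⟩) g.surjective_rangeRestrict
  exact ⟨k, by ext q; exact congr_arg Subtype.val (LinearMap.congr_fun hk q)⟩

theorem stmt_7_general
    {S : Type*} [CommRing S]
    (ω : S) (hω : ω ∈ nonZeroDivisors S)
    {Q G P : Type*}
    [AddCommGroup Q] [Module S Q] [Module.Projective S Q]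
    [AddCommGroup G] [Module S G]
    [AddCommGroup P] [Module S P]
    (g : G →ₗ[S] P)
    (hcoker : ∀ p : P, ω • p ∈ LinearMap.range g)
    (φ₁ : G →ₗ[S] Q) (φ₀ : P →ₗ[S] Q)
    (hcomm : φ₀.comp g = ω • φ₁)
    (hφ₀ : Function.Surjective φ₀) :
    ∃ (ψ₁ : Q →ₗ[S] G) (ψ₀ : Q →ₗ[S] P),
      g.comp ψ₁ = ω • ψ₀ ∧
      φ₁.comp ψ₁ = LinearMap.id ∧
      φ₀.comp ψ₀ = LinearMap.id := by
  obtain ⟨ψ₀, hψ₀⟩ := Module.Projective.exists_comp_eq_of_range_le φ₀ LinearMap.id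
    (by rw [range_eq_top.mpr hφ₀]; exact le_top)
  obtain ⟨ψ₁, hψ₁⟩ := Module.Projective.exists_comp_eq_of_range_le g (ω • ψ₀)
    (by rintro _ ⟨q, rfl⟩; exact hcoker (ψ₀ q))
  have hreg : IsSMulRegular Q ω := Module.Flat.isSMulRegular_of_nonZeroDivisors hω
  have hsmul : ω • (φ₁ ∘ₗ ψ₁) = ω • LinearMap.id :=
    calc ω • (φ₁ ∘ₗ ψ₁) = φ₀ ∘ₗ g ∘ₗ ψ₁ := by rw [← comp_assoc, hcomm, smul_comp]
      _ = ω • LinearMap.id := by rw [hψ₁, comp_smul, hψ₀]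
  refine ⟨ψ₁, ψ₀, hψ₁, ?_, hψ₀⟩
  ext q
  exact hreg (LinearMap.congr_fun hsmul q)

/-- part of Lemma 2.9: `(Q →ω→ Q)` is a projective object of
`Mon(ω, 𝒢)`.
Let `Q` be a finitely generated projective `S`-module, `g : G → P` injective
with cokernel annihilated by `ω`, and `(φ₁, φ₀) : (G →g→ P) → (Q →ω→ Q)` a
morphism of arrows (`φ₀ ∘ g = ω • φ₁`) with `φ₀` surjective.  Then the
morphism splits: there are `ψ₁ : Q → G` and `ψ₀ : Q → P` with
`g ∘ ψ₁ = ω • ψ₀`, `φ₁ ∘ ψ₁ = id_Q` and `φ₀ ∘ ψ₀ = id_Q`. -/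
theorem stmt_7
    {S : Type*} [CommRing S] [IsNoetherianRing S] [IsLocalRing S]
    (ω : S) (hω_mem : ω ∈ IsLocalRing.maximalIdeal S) (hω : ω ∈ nonZeroDivisors S)
    {Q G P : Type*}
    [AddCommGroup Q] [Module S Q] [Module.Finite S Q] [Module.Projective S Q]
    [AddCommGroup G] [Module S G] [Module.Finite S G]
    [AddCommGroup P] [Module S P] [Module.Finite S P]
    (g : G →ₗ[S] P) (hg : Function.Injective g)
    (hcoker : ∀ p : P, ω • p ∈ LinearMap.range g)
    (φ₁ : G →ₗ[S] Q) (φ₀ : P →ₗ[S] Q)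
    (hcomm : φ₀.comp g = ω • φ₁)
    (hφ₀ : Function.Surjective φ₀) :
    ∃ (ψ₁ : Q →ₗ[S] G) (ψ₀ : Q →ₗ[S] P),
      g.comp ψ₁ = ω • ψ₀ ∧
      φ₁.comp ψ₁ = LinearMap.id ∧
      φ₀.comp ψ₀ = LinearMap.id :=
  stmt_7_general ω hω g hcoker φ₁ φ₀ hcomm hφ₀
end

section
/- Let Q be a finitely generated projective S-module (so ω is a non-zerodivisor on Q), let g : G → P be an injective S-linear map whose cokernel is annihilated by ω, and let φ₁ : Q → G and φ₀ : Q → P be S-linear maps with g ∘ φ₁ = ω • φ₀. Suppose there exists an S-linear map ψ₁ : G → Q with ψ₁ ∘ φ₁ = id_Q. Then there exists an S-linear map ψ₀ : P → Q such that ψ₀ ∘ g = ω • ψ₁ and ψ₀ ∘ φ₀ = id_Q. (This is the statement that (Q →ω→ Q) is an injective object of Mon(ω, 𝒢): every admissible monomorphism out of it splits, given a retraction of the top component; part of Lemma 2.9 of the paper.) -/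
/-- part of Lemma 2.9: `(Q →ω→ Q)` is an injective object of
`Mon(ω, 𝒢)`.
Let `Q` be a finitely generated projective `S`-module, `g : G → P` injective
with cokernel annihilated by `ω`, and `(φ₁, φ₀) : (Q →ω→ Q) → (G →g→ P)` a
morphism of arrows (`g ∘ φ₁ = ω • φ₀`).  If `ψ₁ : G → Q` is a retraction of
the top component (`ψ₁ ∘ φ₁ = id_Q`), then there exists `ψ₀ : P → Q` with
`ψ₀ ∘ g = ω • ψ₁` and `ψ₀ ∘ φ₀ = id_Q`. -/
theorem stmt_8
    {S : Type*} [CommRing S] [IsNoetherianRing S] [IsLocalRing S]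
    (ω : S) (hω_mem : ω ∈ IsLocalRing.maximalIdeal S) (hω : ω ∈ nonZeroDivisors S)
    {Q G P : Type*}
    [AddCommGroup Q] [Module S Q] [Module.Finite S Q] [Module.Projective S Q]
    [AddCommGroup G] [Module S G] [Module.Finite S G]
    [AddCommGroup P] [Module S P] [Module.Finite S P]
    (g : G →ₗ[S] P) (hg : Function.Injective g)
    (hcoker : ∀ p : P, ω • p ∈ LinearMap.range g)
    (φ₁ : Q →ₗ[S] G) (φ₀ : Q →ₗ[S] P)
    (hcomm : g.comp φ₁ = ω • φ₀)
    (ψ₁ : G →ₗ[S] Q) (hψ₁ : ψ₁.comp φ₁ = LinearMap.id) :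
    ∃ ψ₀ : P →ₗ[S] Q,
      ψ₀.comp g = ω • ψ₁ ∧
      ψ₀.comp φ₀ = LinearMap.id := by
  -- lift: for each p, the unique l p with g (l p) = ω • p
  choose l hl using hcoker
  let lmap : P →ₗ[S] G :=
    { toFun := l
      map_add' := fun p q => hg (by rw [hl, map_add, hl, hl, smul_add])
      map_smul' := fun s p => hg (by
        simp only [hl, map_smul, RingHom.id_apply]; rw [smul_comm]) }
  have hlmap : ∀ p, lmap p = l p := fun _ => rfl
  refine ⟨ψ₁.comp lmap, ?_, ?_⟩
  · have h1 : lmap.comp g = ω • LinearMap.id (R := S) (M := G) := by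
      apply LinearMap.ext; intro x
      apply hg
      simp [hlmap, hl, map_smul]
    ext x
    have := congrArg (fun f => ψ₁ (f x)) h1
    simpa using this
  · have h2 : lmap.comp φ₀ = φ₁ := by
      apply LinearMap.ext; intro q
      apply hg
      have := congrArg (fun f => f q) hcomm
      simpa [hlmap, hl] using this.symm
    ext q
    have := congrArg (fun f => ψ₁ (f q)) h2
    have h3 := congrArg (fun f => f q) hψ₁
    simp at this h3
    simp [this, h3]
end

section
/- Let g : G → P be an injective S-linear map whose cokernel is annihilated by ω, let g_Σ : P → G be the unique map with g ∘ g_Σ = ω·id_P and g_Σ ∘ g = ω·id_G, and let π : Q → G be a surjective S-linear map with Q projective. Define φ₁ = [π, g_Σ] : Q ⊕ P → G (sending (q, p) to π(q) + g_Σ(p)) and φ₀ = [g ∘ π, id_P] : Q ⊕ P → P (sending (q, p) to g(π(q)) + p). Then φ₁ and φ₀ are surjective and g ∘ φ₁ = φ₀ ∘ (id_Q ⊕ ω·id_P); that is, (φ₁, φ₀) is a componentwise surjective morphism of arrows from (Q ⊕ P →(id⊕ω)→ Q ⊕ P) onto (G →g→ P). (Projective-cover construction in Proposition 2.13 of the paper: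 Mon(ω, 𝒢) has enough projectives.) -/
/-- projective-cover construction in Proposition 2.13:
`Mon(ω, 𝒢)` has enough projectives.
Let `g : G → P` be injective with cokernel annihilated by `ω`, `gSig : P → G`
the map with `g ∘ gSig = ω · id_P` and `gSig ∘ g = ω · id_G`, and `π : Q → G`
a surjection from a finitely generated projective module `Q`.  Define
`φ₁ = [π, gSig] : Q ⊕ P → G`, `(q, p) ↦ π q + gSig p`, and
`φ₀ = [g ∘ π, id_P] : Q ⊕ P → P`, `(q, p) ↦ g (π q) + p`.  Then `φ₁` and `φ₀`
are surjective and `g ∘ φ₁ = φ₀ ∘ (id_Q ⊕ ω · id_P)`; that is, `(φ₁, φ₀)` is a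
componentwise surjective morphism of arrows
`(Q ⊕ P →(id ⊕ ω)→ Q ⊕ P) → (G →g→ P)`. -/
theorem stmt_9
    {S : Type*} [CommRing S] [IsNoetherianRing S] [IsLocalRing S]
    (ω : S) (hω_mem : ω ∈ IsLocalRing.maximalIdeal S) (hω : ω ∈ nonZeroDivisors S)
    {G P Q : Type*}
    [AddCommGroup G] [Module S G] [Module.Finite S G]
    [AddCommGroup P] [Module S P] [Module.Finite S P]
    [AddCommGroup Q] [Module S Q] [Module.Finite S Q] [Module.Projective S Q]
    (g : G →ₗ[S] P) (hg : Function.Injective g)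
    (hcoker : ∀ p : P, ω • p ∈ LinearMap.range g)
    (gSig : P →ₗ[S] G)
    (h1 : g.comp gSig = ω • (LinearMap.id : P →ₗ[S] P))
    (h2 : gSig.comp g = ω • (LinearMap.id : G →ₗ[S] G))
    (π : Q →ₗ[S] G) (hπ : Function.Surjective π) :
    Function.Surjective (π.coprod gSig) ∧
    Function.Surjective ((g.comp π).coprod LinearMap.id) ∧
    g.comp (π.coprod gSig) =
      ((g.comp π).coprod LinearMap.id).comp
        (LinearMap.prodMap (LinearMap.id : Q →ₗ[S] Q)
          (ω • (LinearMap.id : P →ₗ[S] P))) := by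
  refine ⟨?_, ?_, ?_⟩
  · intro x
    obtain ⟨q, hq⟩ := hπ x
    exact ⟨(q, 0), by simp [hq]⟩
  · intro p
    exact ⟨(0, p), by simp⟩
  · ext x
    · simp
    · have := LinearMap.congr_fun h1 x
      simp at this ⊢
      simp [this]
end
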